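/- arXiv:2510.18008 — 2 statements merged into one kernel-verified Lean document; each statement's English description precedes it below -/
import Mathlib

section
/- Let X* ∈ ℝ^d be a sum of n one-hot vectors with v ≤ n non-zero entries, and suppose x̂ ∈ ℝ^d satisfies ‖x̂ − X*/‖X*‖₂‖₂ ≤ ε with 0 < ε < 1/(2n). Let x̂_th retain the n largest-magnitude entries of x̂ and zero the rest. Then ‖x̂_th − X*/‖X*‖₂‖₂ ≤ ε. -/
open Finset

/-!
Write `Y = X*` as `∑ i, single (j i) 1`. Its entries are the multiplicities `#{i | j i = m}`, so it
has at most `n` non-zero entries, each at least `1`, and `‖Y‖ ≤ n`; hence every non-zero entry of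
`Y / ‖Y‖` exceeds `1/n > 2ε`. Being `ε`-close to `Y / ‖Y‖`, `x̂` is then strictly larger in absolute
value on the support of `Y` than off it, so a set of `n` largest entries of `x̂` contains that
support. Zeroing entries of `x̂` off a set containing the support of `Y / ‖Y‖` can only decrease
the distance to it.
-/

theorem Finset.subset_of_forall_lt_of_card_le {ι α : Type*} [LinearOrder α] {f : ι → α}
    {S T : Finset ι} (hS : ∀ i ∈ S, ∀ j ∉ S, f j ≤ f i) (hT : ∀ i ∈ T, ∀ j ∉ T, f j < f i)
    (hcard : #T ≤ #S) : T ⊆ S := by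
  classical
  intro m hmT
  by_contra hmS
  obtain ⟨i, hiS, hiT⟩ : ∃ i ∈ S, i ∉ T := by
    by_contra! hST
    have := card_le_card (insert_subset hmT hST)
    rw [card_insert_of_notMem hmS] at this
    omega
  exact (hT m hmT i hiT).not_ge (hS i hiS m hmS)

namespace EuclideanSpace

section Entries

variable {ι : Type*} [Fintype ι]

theorem abs_apply_lt_abs_apply_of_norm_sub_le {x y : EuclideanSpace ℝ ι} {ε : ℝ}
    (h : ‖x - y‖ ≤ ε) {k m : ι} (hk : y k = 0) (hm : 2 * ε < y m) : |x k| < |x m| := by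
  have dist_le (l : ι) : |x l - y l| ≤ ε := (PiLp.norm_apply_le (x - y) l).trans h
  have hxk := dist_le k
  rw [hk, sub_zero] at hxk
  have hxm := (abs_le.mp (dist_le m)).1
  linarith [le_abs_self (x m)]

variable [DecidableEq ι]

theorem norm_restrict_sub_le {𝕜 : Type*} [RCLike 𝕜] {x y z : EuclideanSpace 𝕜 ι}
    {S : Finset ι} (hy : ∀ j ∉ S, y j = 0) (hz : ∀ j, z j = if j ∈ S then x j else 0) :
    ‖z - y‖ ≤ ‖x - y‖ := by
  rw [norm_eq, norm_eq]
  gcongr with j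
  by_cases hj : j ∈ S <;> simp [hz, hj, hy]

end Entries

section OneHot

variable {ι κ : Type*} [DecidableEq ι] [Fintype κ] (j : κ → ι)

theorem sum_single_one_apply (m : ι) :
    (∑ i, single (j i) (1 : ℝ)) m = #{i | j i = m} := by
  simp [Pi.single_apply, eq_comm]

variable [Fintype ι]

theorem card_filter_sum_single_one_ne_zero_le :
    #{m | (∑ i, single (j i) (1 : ℝ)) m ≠ 0} ≤ Fintype.card κ := by
  have support_eq : ({m | (∑ i, single (j i) (1 : ℝ)) m ≠ 0} : Finset ι) = univ.image j := by
    ext m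
    simp [sum_single_one_apply]
  rw [support_eq]
  exact card_image_le

theorem norm_sum_single_one_le : ‖∑ i, single (j i) (1 : ℝ)‖ ≤ Fintype.card κ :=
  (norm_sum_le _ _).trans (by simp)

theorem inv_card_le_normalize_sum_single_one_apply {m : ι}
    (hm : (∑ i, single (j i) (1 : ℝ)) m ≠ 0) :
    (Fintype.card κ : ℝ)⁻¹ ≤ (‖∑ i, single (j i) (1 : ℝ)‖⁻¹ • ∑ i, single (j i) (1 : ℝ)) m := by
  set Y := ∑ i, single (j i) (1 : ℝ)
  have one_le : 1 ≤ Y m := by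
    rw [sum_single_one_apply] at hm ⊢
    exact Nat.one_le_cast.mpr (Nat.one_le_iff_ne_zero.mpr (Nat.cast_ne_zero.mp hm))
  have norm_pos : 0 < ‖Y‖ :=
    one_pos.trans_le (one_le.trans ((le_abs_self _).trans (PiLp.norm_apply_le Y m)))
  calc (Fintype.card κ : ℝ)⁻¹ ≤ ‖Y‖⁻¹ * 1 := by
        rw [mul_one]; exact inv_anti₀ norm_pos (norm_sum_single_one_le j)
    _ ≤ ‖Y‖⁻¹ * Y m := by gcongr
    _ = (‖Y‖⁻¹ • Y) m := rfl

end OneHot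

end EuclideanSpace

theorem truncation_preserves_error_general {d n : ℕ}
    (X : Fin n → EuclideanSpace ℝ (Fin d))
    (hone : ∀ i, ∃ j : Fin d, X i = fun m => if m = j then (1 : ℝ) else 0)
    (xhat : EuclideanSpace ℝ (Fin d)) (ε : ℝ) (hε : ε < 1 / (2 * n))
    (hclose : ‖xhat - (‖∑ i, X i‖)⁻¹ • (∑ i, X i)‖ ≤ ε)
    (S : Finset (Fin d)) (hScard : S.card = n)
    (hStop : ∀ i ∈ S, ∀ j ∉ S, |xhat j| ≤ |xhat i|)
    (xth : EuclideanSpace ℝ (Fin d))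
    (hxth : ∀ j, xth j = if j ∈ S then xhat j else 0) :
    ‖xth - (‖∑ i, X i‖)⁻¹ • (∑ i, X i)‖ ≤ ε := by
  choose j hj using hone
  obtain rfl : X = fun i => EuclideanSpace.single (j i) (1 : ℝ) := by
    funext i
    ext m
    simp [hj]
  set Y := ∑ i, EuclideanSpace.single (j i) (1 : ℝ)
  have two_ε_lt : 2 * ε < (n : ℝ)⁻¹ := by
    have : (1 : ℝ) / (2 * n) * 2 = (n : ℝ)⁻¹ := by ring
    linarith
  have support_subset : ({m | Y m ≠ 0} : Finset (Fin d)) ⊆ S := by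
    refine Finset.subset_of_forall_lt_of_card_le hStop (fun m hm k hk => ?_) ?_
    · simp only [mem_filter, mem_univ, true_and, not_not] at hm hk
      refine EuclideanSpace.abs_apply_lt_abs_apply_of_norm_sub_le hclose ?_ ?_
      · rw [PiLp.smul_apply, hk, smul_zero]
      · exact two_ε_lt.trans_le
          (Fintype.card_fin n ▸ EuclideanSpace.inv_card_le_normalize_sum_single_one_apply j hm)
    · exact hScard ▸ Fintype.card_fin n ▸
        EuclideanSpace.card_filter_sum_single_one_ne_zero_le j
  refine (EuclideanSpace.norm_restrict_sub_le (fun m hm => ?_) hxth).trans hclose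
  have : Y m = 0 := by simpa using mt (@support_subset m) hm
  rw [PiLp.smul_apply, this, smul_zero]

/-- If `X*` is a sum of `n` one-hot vectors and `x̂` satisfies
`‖x̂ - X*/‖X*‖₂‖₂ ≤ ε` with `0 < ε < 1/(2n)`, then the truncation `x̂_th` of `x̂`
to its `n` largest-magnitude entries satisfies the same bound. -/
theorem truncation_preserves_error {d n : ℕ} (hn : 1 ≤ n)
    (X : Fin n → EuclideanSpace ℝ (Fin d))
    (hone : ∀ i, ∃ j : Fin d, X i = fun m => if m = j then (1 : ℝ) else 0)
    (xhat : EuclideanSpace ℝ (Fin d)) (ε : ℝ) (hε0 : 0 < ε) (hε : ε < 1 / (2 * n))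
    (hclose : ‖xhat - (‖∑ i, X i‖)⁻¹ • (∑ i, X i)‖ ≤ ε)
    (S : Finset (Fin d)) (hScard : S.card = n)
    (hStop : ∀ i ∈ S, ∀ j ∉ S, |xhat j| ≤ |xhat i|)
    (xth : EuclideanSpace ℝ (Fin d))
    (hxth : ∀ j, xth j = if j ∈ S then xhat j else 0) :
    ‖xth - (‖∑ i, X i‖)⁻¹ • (∑ i, X i)‖ ≤ ε :=
  truncation_preserves_error_general X hone xhat ε hε hclose S hScard hStop xth hxth
end

section
/- Let X* ∈ ℝ^d be a sum of n one-hot vectors, and let x̂_th ∈ ℝ^d be a vector with at most n non-zero entries, ‖x̂_th‖₂ ≤ 1, satisfying ‖x̂_th − X*/‖X*‖₂‖₂ ≤ ε with 0 < ε < 1/(2n). Define x̂_f = x̂_th · n/(∑_j x̂_th[j]). Then ‖x̂_f − X*‖₂ ≤ ‖X*‖₂·ε + ‖X*‖₂·√(2n)·ε / (n/‖X*‖₂ − √(2n)·ε). -/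
/-!
Write `S = ∑ i, X i` and `u = S / ‖S‖`, so `S` has coordinate sum `n`, at most `n` non-zero
coordinates and `1 ≤ ‖S‖ ≤ n`. Since `x̂_th - u` has at most `2n` non-zero coordinates,
Cauchy–Schwarz bounds its coordinate sum by `√(2n) ε`, so the normaliser `t = ∑ j, x̂_th j` is
within `√(2n) ε` of `n / ‖S‖ ≥ 1`, hence positive. The error then splits as
`(n / t - ‖S‖) • x̂_th + ‖S‖ • (x̂_th - u)`, and `|n / t - ‖S‖| = ‖S‖ |t - n / ‖S‖| / t`.
-/

open Finset

section Sparse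

variable {ι : Type*} [Fintype ι]

theorem abs_sum_le_sqrt_card_support_mul_norm (x : EuclideanSpace ℝ ι) :
    |∑ i, x i| ≤ √(#{i | x i ≠ 0} : ℝ) * ‖x‖ := by
  set s : Finset ι := {i | x i ≠ 0}
  have hsq : (∑ i ∈ s, x i) ^ 2 ≤ #s * ‖x‖ ^ 2 := by
    rw [EuclideanSpace.real_norm_sq_eq]
    calc (∑ i ∈ s, x i) ^ 2 ≤ #s * ∑ i ∈ s, x i ^ 2 := sq_sum_le_card_mul_sum_sq
      _ ≤ #s * ∑ i, x i ^ 2 := mul_le_mul_of_nonneg_left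
        (sum_le_sum_of_subset_of_nonneg (subset_univ s) fun i _ _ => sq_nonneg (x i))
        (Nat.cast_nonneg _)
  rw [← sum_filter_ne_zero, ← Real.sqrt_sq (norm_nonneg x), ← Real.sqrt_mul (Nat.cast_nonneg _)]
  exact Real.abs_le_sqrt hsq

theorem card_support_sub_le [DecidableEq ι] (x y : EuclideanSpace ℝ ι) :
    #{i | (x - y) i ≠ 0} ≤ #{i | x i ≠ 0} + #{i | y i ≠ 0} := by
  refine (card_le_card fun i hi => ?_).trans (card_union_le _ _)
  rw [mem_filter_univ, PiLp.sub_apply] at hi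
  rw [mem_union, mem_filter_univ, mem_filter_univ]
  by_contra! h
  exact hi (by rw [h.1, h.2, sub_zero])

theorem card_support_smul_le (c : ℝ) (x : EuclideanSpace ℝ ι) :
    #{i | (c • x) i ≠ 0} ≤ #{i | x i ≠ 0} :=
  card_le_card <| monotone_filter_right _ fun i _ hi h =>
    hi (by rw [PiLp.smul_apply, h, smul_zero])

theorem abs_sum_sub_sum_le {x y : EuclideanSpace ℝ ι} {k l : ℕ}
    (hx : #{i | x i ≠ 0} ≤ k) (hy : #{i | y i ≠ 0} ≤ l) :
    |∑ i, x i - ∑ i, y i| ≤ √(k + l : ℝ) * ‖x - y‖ := by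
  classical
  have hcard : (#{i | (x - y) i ≠ 0} : ℝ) ≤ k + l := mod_cast (card_support_sub_le x y).trans (add_le_add hx hy)
  calc |∑ i, x i - ∑ i, y i| = |∑ i, (x - y) i| := by
        simp only [PiLp.sub_apply, sum_sub_distrib]
    _ ≤ √(#{i | (x - y) i ≠ 0} : ℝ) * ‖x - y‖ := abs_sum_le_sqrt_card_support_mul_norm _
    _ ≤ √(k + l : ℝ) * ‖x - y‖ := by gcongr

end Sparse

section OneHot

variable {ι κ : Type*} [DecidableEq ι] [Fintype κ] (j : κ → ι)

theorem sum_single_one_apply (m : ι) :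
    (∑ k, EuclideanSpace.single (j k) (1 : ℝ)) m = #{k | j k = m} := by
  simp [WithLp.ofLp_sum, Finset.sum_apply, Pi.single_apply, eq_comm]

variable [Fintype ι]

theorem sum_coord_sum_single_one :
    ∑ m, (∑ k, EuclideanSpace.single (j k) (1 : ℝ)) m = Fintype.card κ := by
  simp_rw [sum_single_one_apply]
  exact_mod_cast (card_eq_sum_card_fiberwise fun k _ => mem_univ (j k)).symm

theorem card_support_sum_single_one_le :
    #{m | (∑ k, EuclideanSpace.single (j k) (1 : ℝ)) m ≠ 0} ≤ Fintype.card κ := by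
  refine (card_le_card fun m hm => ?_).trans (card_image_le (s := univ) (f := j))
  rw [mem_filter_univ, sum_single_one_apply, Nat.cast_ne_zero, ← pos_iff_ne_zero, card_pos] at hm
  obtain ⟨k, hk⟩ := hm
  exact mem_image.2 ⟨k, mem_univ k, (mem_filter_univ k).1 hk⟩

theorem norm_sum_single_one_le :
    ‖∑ k, EuclideanSpace.single (j k) (1 : ℝ)‖ ≤ Fintype.card κ :=
  (norm_sum_le _ _).trans (by simp)

theorem one_le_norm_sum_single_one (k : κ) :
    1 ≤ ‖∑ k, EuclideanSpace.single (j k) (1 : ℝ)‖ :=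
  calc 1 ≤ (∑ k, EuclideanSpace.single (j k) (1 : ℝ)) (j k) := by
        rw [sum_single_one_apply, Nat.one_le_cast]
        exact card_pos.2 ⟨k, (mem_filter_univ _).2 rfl⟩
    _ ≤ ‖∑ k, EuclideanSpace.single (j k) (1 : ℝ)‖ :=
        (Real.le_norm_self _).trans (PiLp.norm_apply_le _ _)

end OneHot

theorem norm_smul_sub_le_abs_mul_add_mul {E : Type*} [NormedAddCommGroup E] [NormedSpace ℝ E]
    (c : ℝ) (x s : E) : ‖c • x - s‖ ≤ |c - ‖s‖| * ‖x‖ + ‖s‖ * ‖x - ‖s‖⁻¹ • s‖ := by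
  rcases eq_or_ne s 0 with rfl | hs
  · simp [norm_smul]
  have hsplit : c • x - s = (c - ‖s‖) • x + ‖s‖ • (x - ‖s‖⁻¹ • s) := by
    rw [smul_sub, smul_smul, mul_inv_cancel₀ (norm_ne_zero_iff.2 hs), one_smul, sub_smul]
    abel
  rw [hsplit]
  refine (norm_add_le _ _).trans_eq ?_
  rw [norm_smul, norm_smul, Real.norm_eq_abs, norm_norm]

theorem abs_div_sub_le_of_abs_sub_le {n r t δ : ℝ} (hr : 0 < r) (ht : |t - n / r| ≤ δ)
    (hδ : δ < n / r) : |n / t - r| ≤ r * δ / (n / r - δ) := by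
  have hlow : n / r - δ ≤ t := by linarith [neg_abs_le (t - n / r)]
  have ht0 : 0 < t := by linarith
  have hδ0 : 0 ≤ δ := (abs_nonneg _).trans ht
  have hrewrite : n / t - r = r * (n / r - t) / t := by field_simp
  calc |n / t - r| = r * |t - n / r| / t := by
        rw [hrewrite, abs_div, abs_mul, abs_of_pos hr, abs_of_pos ht0, abs_sub_comm]
    _ ≤ r * δ / t := by gcongr
    _ ≤ r * δ / (n / r - δ) := by gcongr

theorem sqrt_mul_lt_one {m ε : ℝ} (hm : 1 ≤ m) (hε0 : 0 ≤ ε) (hε : ε < 1 / m) : √m * ε < 1 :=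
  calc √m * ε ≤ m * ε := by
        gcongr
        exact (Real.sqrt_le_left (by linarith)).2 (by nlinarith)
    _ < 1 := by rwa [lt_div_iff₀ (by linarith), mul_comm] at hε

/-- Error bound for the rescaled truncated estimate in histogram estimation:
if `X*` is a sum of `n` one-hot vectors, `x̂_th` has at most `n` non-zero entries,
`‖x̂_th‖₂ ≤ 1`, and `‖x̂_th - X*/‖X*‖₂‖₂ ≤ ε` with `0 < ε < 1/(2n)`, then the rescaled
vector `x̂_f = (n / ∑ j x̂_th j) • x̂_th` satisfies
`‖x̂_f - X*‖₂ ≤ ‖X*‖₂ ε + ‖X*‖₂ √(2n) ε / (n/‖X*‖₂ - √(2n) ε)`. -/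
theorem rescaled_truncation_error {d n : ℕ} (hn : 1 ≤ n)
    (X : Fin n → EuclideanSpace ℝ (Fin d))
    (hone : ∀ i, ∃ j : Fin d, X i = fun m => if m = j then (1 : ℝ) else 0)
    (xth : EuclideanSpace ℝ (Fin d))
    (hsparse : (Finset.univ.filter fun j => xth j ≠ 0).card ≤ n)
    (hnorm : ‖xth‖ ≤ 1)
    (ε : ℝ) (hε0 : 0 < ε) (hε : ε < 1 / (2 * n))
    (hclose : ‖xth - (‖∑ i, X i‖)⁻¹ • (∑ i, X i)‖ ≤ ε) :
    ‖((n : ℝ) / ∑ j, xth j) • xth - ∑ i, X i‖ ≤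
      ‖∑ i, X i‖ * ε +
        ‖∑ i, X i‖ * Real.sqrt (2 * n) * ε / ((n : ℝ) / ‖∑ i, X i‖ - Real.sqrt (2 * n) * ε) := by
  choose j hj using hone
  obtain rfl : X = fun k => EuclideanSpace.single (j k) (1 : ℝ) :=
    funext fun k => (WithLp.ofLp_injective 2) <| (hj k).trans (by ext m; simp)
  set S := ∑ k, EuclideanSpace.single (j k) (1 : ℝ)
  have hS1 : 1 ≤ ‖S‖ := one_le_norm_sum_single_one j ⟨0, hn⟩
  have hSn : ‖S‖ ≤ n := by simpa using norm_sum_single_one_le j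
  have hsum : |∑ m, xth m - n / ‖S‖| ≤ √(2 * n) * ε := by
    have hsupp : #{m | (‖S‖⁻¹ • S) m ≠ 0} ≤ n :=
      (card_support_smul_le _ S).trans <|
        (card_support_sum_single_one_le j).trans_eq (Fintype.card_fin n)
    have hcoord : ∑ m, (‖S‖⁻¹ • S) m = n / ‖S‖ := by
      simp only [PiLp.smul_apply, smul_eq_mul, ← mul_sum, S, sum_coord_sum_single_one,
        Fintype.card_fin, div_eq_inv_mul]
    calc |∑ m, xth m - n / ‖S‖| = |∑ m, xth m - ∑ m, (‖S‖⁻¹ • S) m| := by rw [hcoord]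
      _ ≤ √(n + n : ℝ) * ‖xth - ‖S‖⁻¹ • S‖ := abs_sum_sub_sum_le hsparse hsupp
      _ ≤ √(2 * n) * ε := by rw [← two_mul]; gcongr
  have hδ : √(2 * n) * ε < n / ‖S‖ :=
    (sqrt_mul_lt_one (by norm_cast; omega) hε0.le hε).trans_le ((one_le_div (by linarith)).2 hSn)
  calc ‖((n : ℝ) / ∑ m, xth m) • xth - S‖
      ≤ |n / ∑ m, xth m - ‖S‖| * ‖xth‖ + ‖S‖ * ‖xth - ‖S‖⁻¹ • S‖ :=
        norm_smul_sub_le_abs_mul_add_mul _ _ _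
    _ ≤ ‖S‖ * (√(2 * n) * ε) / (n / ‖S‖ - √(2 * n) * ε) * 1 + ‖S‖ * ε := by
        gcongr
        exact abs_div_sub_le_of_abs_sub_le (by linarith) hsum hδ
    _ = ‖S‖ * ε + ‖S‖ * √(2 * n) * ε / (n / ‖S‖ - √(2 * n) * ε) := by ring
end
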